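/- Let A = 1 − q·m and suppose A > 0 and A² − 4h = 0 (so A/2 = √h). Then the Fréchet derivative of F at E₄ = (√h, m) is the linear map given by the matrix [[0, −q·√h], [0, s·m·(1 − m/√h)]]; in particular this matrix has eigenvalues 0 and s·m·(1 − m/√h), and if m ≠ √h the second eigenvalue is nonzero. -/

import Mathlib

/-- The predator–prey vector field
    `F(x,y) = (x(1-x) - q x y - h, s y (1 - y/x)(y - m))`. -/
noncomputable def F (q s h m : ℝ) (p : ℝ × ℝ) : ℝ × ℝ :=
  (p.1 * (1 - p.1) - q * p.1 * p.2 - h, s * p.2 * (1 - p.2 / p.1) * (p.2 - m))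

/-- The continuous linear map `ℝ² → ℝ²` with matrix `[[a, b], [c, d]]`. -/
noncomputable def clm (a b c d : ℝ) : (ℝ × ℝ) →L[ℝ] (ℝ × ℝ) :=
  (a • ContinuousLinearMap.fst ℝ ℝ ℝ + b • ContinuousLinearMap.snd ℝ ℝ ℝ).prod
    (c • ContinuousLinearMap.fst ℝ ℝ ℝ + d • ContinuousLinearMap.snd ℝ ℝ ℝ)

/-! With `A = 1 - q m`, the equilibrium abscissa `√h` is the double root `x = A/2` of
`x(1 - x) - q m x - h = 0`, so `∂f₁/∂x = A - 2√h` vanishes there, and `∂f₂/∂x` vanishes because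
of the factor `y - m`. The Jacobian is therefore upper triangular, and its eigenvalues are its
diagonal entries. -/

theorem half_eq_sqrt_of_sq_eq_four_mul {A h : ℝ} (hA : 0 ≤ A) (hΔ : A ^ 2 = 4 * h) :
    A / 2 = √h := by
  rw [show h = (A / 2) ^ 2 by linear_combination -hΔ / 4, Real.sqrt_sq (by positivity)]

theorem Matrix.mem_spectrum_fin_two_upper_iff {K : Type*} [Field K] (a b d x : K) :
    x ∈ spectrum K !![a, b; 0, d] ↔ x = a ∨ x = d := by
  rw [spectrum.mem_iff, Matrix.isUnit_iff_isUnit_det, isUnit_iff_ne_zero, not_not,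
    Matrix.det_fin_two]
  simp [Matrix.algebraMap_matrix_apply, sub_eq_zero, eq_comm]

theorem hasFDerivAt_F (q s h m x y : ℝ) (hx : x ≠ 0) :
    HasFDerivAt (F q s h m)
      (clm (1 - 2 * x - q * y) (-q * x) (s * y * (y / x ^ 2) * (y - m))
        (s * ((1 - y / x) * (y - m) - y / x * (y - m) + y * (1 - y / x))))
      (x, y) := by
  have hfst : HasFDerivAt (fun p : ℝ × ℝ => p.1) (ContinuousLinearMap.fst ℝ ℝ ℝ) (x, y) :=
    hasFDerivAt_fst
  have hsnd : HasFDerivAt (fun p : ℝ × ℝ => p.2) (ContinuousLinearMap.snd ℝ ℝ ℝ) (x, y) :=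
    hasFDerivAt_snd
  have hprey := ((hfst.mul ((hasFDerivAt_const 1 _).sub hfst)).sub
    (((hasFDerivAt_const q _).mul hfst).mul hsnd)).sub (hasFDerivAt_const h _)
  have hpred := (((hasFDerivAt_const s _).mul hsnd).mul
    ((hasFDerivAt_const 1 _).sub (hsnd.mul ((hasFDerivAt_inv hx).comp (x, y) hfst)))).mul
    (hsnd.sub (hasFDerivAt_const m _))
  refine ((hprey.prodMk hpred).congr_fderiv ?_).congr_of_eventuallyEq
    (.of_forall fun p => by simp [F, div_eq_mul_inv])
  refine ContinuousLinearMap.ext fun v => Prod.ext ?_ ?_ <;>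
    simp only [clm, ContinuousLinearMap.prod_apply, add_apply, sub_apply, smul_apply, zero_apply,
      ContinuousLinearMap.comp_apply, ContinuousLinearMap.coe_fst', ContinuousLinearMap.coe_snd',
      ContinuousLinearMap.toSpanSingleton_apply, Pi.sub_apply, Pi.mul_apply, Function.comp_apply,
      smul_eq_mul] <;>
    field_simp <;> ring

theorem hasFDerivAt_F_of_one_sub_mul_eq_two_mul (q s h m a : ℝ) (ha : a ≠ 0)
    (hA : 1 - q * m = 2 * a) :
    HasFDerivAt (F q s h m) (clm 0 (-q * a) 0 (s * m * (1 - m / a))) (a, m) := by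
  convert hasFDerivAt_F q s h m a m ha using 2
  · linear_combination -hA
  · ring
  · ring

theorem stmt8_general (q s h m : ℝ) (hs : 0 < s)
    (hm0 : 0 < m) (hA : 0 < 1 - q*m) (hΔ : (1 - q*m)^2 - 4*h = 0) :
    (1 - q*m)/2 = Real.sqrt h ∧
    HasFDerivAt (F q s h m)
      (clm 0 (-q*Real.sqrt h) 0 (s*m*(1 - m/Real.sqrt h))) ((Real.sqrt h, m) : ℝ × ℝ) ∧
    (0 : ℝ) ∈ spectrum ℝ
      (!![0, -q*Real.sqrt h; 0, s*m*(1 - m/Real.sqrt h)] : Matrix (Fin 2) (Fin 2) ℝ) ∧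
    (s*m*(1 - m/Real.sqrt h)) ∈ spectrum ℝ
      (!![0, -q*Real.sqrt h; 0, s*m*(1 - m/Real.sqrt h)] : Matrix (Fin 2) (Fin 2) ℝ) ∧
    (m ≠ Real.sqrt h → s*m*(1 - m/Real.sqrt h) ≠ 0) := by
  have hsqrt : (1 - q*m)/2 = √h := half_eq_sqrt_of_sq_eq_four_mul hA.le (sub_eq_zero.1 hΔ)
  have hpos : 0 < √h := hsqrt ▸ half_pos hA
  refine ⟨hsqrt, hasFDerivAt_F_of_one_sub_mul_eq_two_mul q s h m _ hpos.ne' (by linarith),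
    (Matrix.mem_spectrum_fin_two_upper_iff _ _ _ _).2 (.inl rfl),
    (Matrix.mem_spectrum_fin_two_upper_iff _ _ _ _).2 (.inr rfl), fun hne => ?_⟩
  have hdiv : 1 - m / √h ≠ 0 :=
    sub_ne_zero.2 fun h1 => hne ((div_eq_one_iff_eq hpos.ne').1 h1.symm)
  exact mul_ne_zero (by positivity) hdiv

/-- With `A = 1 - q m > 0` and `A² - 4h = 0` (so `A/2 = √h`), the Fréchet derivative of
`F` at `E₄ = (√h, m)` is the linear map with matrix `[[0, -q√h], [0, s m (1 - m/√h)]]`;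
this matrix has eigenvalues `0` and `s m (1 - m/√h)`, and if `m ≠ √h` the second
eigenvalue is nonzero. -/
theorem stmt8 (q s h m : ℝ) (hq : 0 < q) (hs : 0 < s) (hh : 0 < h)
    (hm0 : 0 < m) (hm1 : m < 1) (hA : 0 < 1 - q*m) (hΔ : (1 - q*m)^2 - 4*h = 0) :
    (1 - q*m)/2 = Real.sqrt h ∧
    HasFDerivAt (F q s h m)
      (clm 0 (-q*Real.sqrt h) 0 (s*m*(1 - m/Real.sqrt h))) ((Real.sqrt h, m) : ℝ × ℝ) ∧
    (0 : ℝ) ∈ spectrum ℝ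
      (!![0, -q*Real.sqrt h; 0, s*m*(1 - m/Real.sqrt h)] : Matrix (Fin 2) (Fin 2) ℝ) ∧
    (s*m*(1 - m/Real.sqrt h)) ∈ spectrum ℝ
      (!![0, -q*Real.sqrt h; 0, s*m*(1 - m/Real.sqrt h)] : Matrix (Fin 2) (Fin 2) ℝ) ∧
    (m ≠ Real.sqrt h → s*m*(1 - m/Real.sqrt h) ≠ 0) :=
  stmt8_general q s h m hs hm0 hA hΔ
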